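/- Under the IV identification assumptions, the CDF of the potential outcome under control for compliers satisfies F_co^{(0)}(t) = [E(1{Y ≤ t}·(1−D) | Z=1) − E(1{Y ≤ t}·(1−D) | Z=0)] / [E(1−D | Z=1) − E(1−D | Z=0)] for all t. -/

import Mathlib

/-!
Given `Z = z`, independence leaves the law of `(Y0, D0, D1)` unchanged, while `1 - D` and
`1{Y ≤ t}(1 - D)` coincide with the indicators of `{Dz = 0}` and `{Y0 ≤ t, Dz = 0}`. The
denominator is thus `P(D1 = 0) - P(D0 = 0)` and the numerator
`P(Y0 ≤ t, D1 = 0) - P(Y0 ≤ t, D0 = 0)`. By monotonicity `{D1 = 0} ⊆ {D0 = 0}` almost surely,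
the difference being the complier event, so these are minus `P(complier)` and minus
`P(Y0 ≤ t, complier)`.
-/

open MeasureTheory ProbabilityTheory Set

section Indicators

variable {Ω : Type*} {D Dz Y Y0 : Ω → ℝ} {s : Set Ω}

lemma eqOn_one_sub_indicator (hDz : EqOn D Dz s) (hbin : ∀ ω, Dz ω = 0 ∨ Dz ω = 1) :
    EqOn (fun ω => 1 - D ω) ({ω | Dz ω = 0}.indicator 1) s := by
  intro ω hω
  rcases hbin ω with h | h <;> simp [indicator, hDz hω, h]

lemma eqOn_ite_le_one_sub_indicator (hDz : EqOn D Dz s) (hbin : ∀ ω, Dz ω = 0 ∨ Dz ω = 1)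
    (hY : ∀ ω, D ω = 0 → Y ω = Y0 ω) (t : ℝ) :
    EqOn (fun ω => if Y ω ≤ t then 1 - D ω else 0)
      (({ω | Y0 ω ≤ t} ∩ {ω | Dz ω = 0}).indicator 1) s := by
  intro ω hω
  rcases hbin ω with h | h
  · have hD0 : D ω = 0 := (hDz hω).trans h
    simp [indicator, hD0, hY ω hD0, h]
  · simp [indicator, hDz hω, h]

lemma setOf_eq_one_and_eq_zero_eq_diff {D0 D1 : Ω → ℝ} (hD1 : ∀ ω, D1 ω = 0 ∨ D1 ω = 1) :
    {ω | D1 ω = 1 ∧ D0 ω = 0} = {ω | D0 ω = 0} \ {ω | D1 ω = 0} := by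
  ext ω
  rcases hD1 ω with h | h <;> simp [h, and_comm]

end Indicators

section Conditioning

variable {Ω α β : Type*} [MeasurableSpace Ω] [MeasurableSpace α] [MeasurableSpace β]
  {μ : Measure Ω}

lemma toReal_cond_apply {s : Set Ω} (hs : MeasurableSet s) (t : Set Ω) :
    (μ[t|s]).toReal = μ.real (s ∩ t) / μ.real s := by
  rw [cond_apply hs, ENNReal.toReal_mul, ENNReal.toReal_inv, div_eq_inv_mul, measureReal_def,
    measureReal_def]

lemma integral_cond_eq_measureReal_of_eqOn {s t : Set Ω} {f : Ω → ℝ} (hs : MeasurableSet s)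
    (ht : MeasurableSet t) (hf : EqOn f (t.indicator 1) s) :
    ∫ ω, f ω ∂μ[|s] = μ[|s].real t := by
  rw [integral_congr_ae (ae_cond_of_forall_mem hs hf), integral_indicator_one ht]

lemma measureReal_inter_sub_inter_of_ae_subset [IsFiniteMeasure μ] (s : Set Ω) {t u : Set Ω}
    (htu : t ≤ᵐ[μ] u) (ht : MeasurableSet t) :
    μ.real (s ∩ u) - μ.real (s ∩ t) = μ.real (s ∩ (u \ t)) := by
  have h : (s ∩ u ∩ t : Set Ω) =ᵐ[μ] (s ∩ t : Set Ω) := by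
    filter_upwards [htu] with ω hω
    exact propext ⟨fun h => ⟨h.1.1, h.2⟩, fun h => ⟨⟨h.1, hω h.2⟩, h.2⟩⟩
  rw [← measureReal_inter_add_sdiff (s := s ∩ u) ht, measureReal_congr h, inter_sdiff_assoc,
    add_sub_cancel_left]

lemma setOf_eq_zero_ae_le_setOf_eq_zero_of_ae_le {D0 D1 : Ω → ℝ}
    (hD0 : ∀ ω, D0 ω = 0 ∨ D0 ω = 1) (hmono : ∀ᵐ ω ∂μ, D0 ω ≤ D1 ω) :
    {ω | D1 ω = 0} ≤ᵐ[μ] {ω | D0 ω = 0} := by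
  filter_upwards [hmono] with ω hle (h1 : D1 ω = 0)
  show D0 ω = 0
  rcases hD0 ω with h0 | h0
  · exact h0
  · linarith

variable [IsFiniteMeasure μ] {X : Ω → α} {V : Ω → β} {s t : Set Ω}

lemma ProbabilityTheory.IndepFun.cond_apply_of_measurableSet_comap (hXV : IndepFun X V μ)
    (hX : Measurable X) (hs : MeasurableSet[.comap X ‹_›] s) (ht : MeasurableSet[.comap V ‹_›] t)
    (hs0 : μ s ≠ 0) :
    μ[t|s] = μ t := by
  rw [cond_apply (hX.comap_le s hs), hXV.meas_inter hs ht,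
    ENNReal.inv_mul_cancel_left hs0 (measure_ne_top _ _)]

lemma ProbabilityTheory.IndepFun.integral_cond_eq_measureReal (hXV : IndepFun X V μ)
    (hX : Measurable X) (hV : Measurable V) {f : Ω → ℝ} (hf : EqOn f (t.indicator 1) s)
    (hs : MeasurableSet[.comap X ‹_›] s) (ht : MeasurableSet[.comap V ‹_›] t) (hs0 : μ s ≠ 0) :
    ∫ ω, f ω ∂μ[|s] = μ.real t := by
  rw [integral_cond_eq_measureReal_of_eqOn (hX.comap_le s hs) (hV.comap_le t ht) hf,
    measureReal_def, measureReal_def, hXV.cond_apply_of_measurableSet_comap hX hs ht hs0]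

end Conditioning

theorem complier_control_cdf_identification_general {Ω : Type*} [MeasurableSpace Ω]
    (μ : Measure Ω) [IsProbabilityMeasure μ]
    (Z D0 D1 Y0 Y1 D Y : Ω → ℝ)
    (hZ : Measurable Z) (hD0 : Measurable D0) (hD1 : Measurable D1)
    (hY0 : Measurable Y0)
    (hD0bin : ∀ ω, D0 ω = 0 ∨ D0 ω = 1)
    (hD1bin : ∀ ω, D1 ω = 0 ∨ D1 ω = 1)
    (hD : ∀ ω, D ω = Z ω * D1 ω + (1 - Z ω) * D0 ω)
    (hYobs : ∀ ω, Y ω = D ω * Y1 ω + (1 - D ω) * Y0 ω)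
    (hindep : IndepFun Z (fun ω => (Y0 ω, Y1 ω, D0 ω, D1 ω)) μ)
    (hmono : ∀ᵐ ω ∂μ, D0 ω ≤ D1 ω)
    (hZ1 : 0 < μ {ω | Z ω = 1}) (hZ0 : 0 < μ {ω | Z ω = 0}) :
    ∀ t : ℝ,
      (μ[|{ω | D1 ω = 1 ∧ D0 ω = 0}] {ω | Y0 ω ≤ t}).toReal =
        ((∫ ω, (if Y ω ≤ t then 1 - D ω else 0) ∂μ[|{ω | Z ω = 1}]) -
            ∫ ω, (if Y ω ≤ t then 1 - D ω else 0) ∂μ[|{ω | Z ω = 0}]) /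
          ((∫ ω, 1 - D ω ∂μ[|{ω | Z ω = 1}]) -
            ∫ ω, 1 - D ω ∂μ[|{ω | Z ω = 0}]) := by
  intro t
  set V : Ω → ℝ × ℝ × ℝ := fun ω => (Y0 ω, D0 ω, D1 ω)
  have hV : Measurable V := by fun_prop
  have hZV : IndepFun Z V μ :=
    hindep.comp (φ := id) (ψ := fun p : ℝ × ℝ × ℝ × ℝ => (p.1, p.2.2)) measurable_id (by fun_prop)
  have hDZ1 : EqOn D D1 {ω | Z ω = 1} := fun ω (h : Z ω = 1) => by simp [hD, h]
  have hDZ0 : EqOn D D0 {ω | Z ω = 0} := fun ω (h : Z ω = 0) => by simp [hD, h]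
  have hYD : ∀ ω, D ω = 0 → Y ω = Y0 ω := fun ω h => by simp [hYobs, h]
  rw [hZV.integral_cond_eq_measureReal hZ hV (eqOn_ite_le_one_sub_indicator hDZ1 hD1bin hYD t)
      ⟨{1}, measurableSet_singleton 1, rfl⟩ ⟨{p | p.1 ≤ t ∧ p.2.2 = 0}, by measurability, rfl⟩
      hZ1.ne',
    hZV.integral_cond_eq_measureReal hZ hV (eqOn_ite_le_one_sub_indicator hDZ0 hD0bin hYD t)
      ⟨{0}, measurableSet_singleton 0, rfl⟩ ⟨{p | p.1 ≤ t ∧ p.2.1 = 0}, by measurability, rfl⟩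
      hZ0.ne',
    hZV.integral_cond_eq_measureReal hZ hV (eqOn_one_sub_indicator hDZ1 hD1bin)
      ⟨{1}, measurableSet_singleton 1, rfl⟩ ⟨{p | p.2.2 = 0}, by measurability, rfl⟩ hZ1.ne',
    hZV.integral_cond_eq_measureReal hZ hV (eqOn_one_sub_indicator hDZ0 hD0bin)
      ⟨{0}, measurableSet_singleton 0, rfl⟩ ⟨{p | p.2.1 = 0}, by measurability, rfl⟩ hZ0.ne']
  have hB0 : MeasurableSet {ω | D0 ω = 0} := hD0 (measurableSet_singleton 0)
  have hB1 : MeasurableSet {ω | D1 ω = 0} := hD1 (measurableSet_singleton 0)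
  have hnever := setOf_eq_zero_ae_le_setOf_eq_zero_of_ae_le hD0bin hmono
  have hnum := measureReal_inter_sub_inter_of_ae_subset {ω | Y0 ω ≤ t} hnever hB1
  have hden := measureReal_inter_sub_inter_of_ae_subset univ hnever hB1
  simp only [univ_inter] at hden
  rw [setOf_eq_one_and_eq_zero_eq_diff hD1bin, toReal_cond_apply (hB0.diff hB1), inter_comm,
    ← hnum, ← hden, ← neg_div_neg_eq, neg_sub, neg_sub]

/-- IV identification of the complier-control outcome CDF:
`F_co^{(0)}(t) = [E(1{Y≤t}·(1−D) | Z=1) − E(1{Y≤t}·(1−D) | Z=0)] /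
  [E(1−D|Z=1) − E(1−D|Z=0)]`. -/
theorem complier_control_cdf_identification {Ω : Type*} [MeasurableSpace Ω]
    (μ : Measure Ω) [IsProbabilityMeasure μ]
    (Z D0 D1 Y0 Y1 D Y : Ω → ℝ)
    (hZ : Measurable Z) (hD0 : Measurable D0) (hD1 : Measurable D1)
    (hY0 : Measurable Y0) (hY1 : Measurable Y1)
    (hZbin : ∀ ω, Z ω = 0 ∨ Z ω = 1)
    (hD0bin : ∀ ω, D0 ω = 0 ∨ D0 ω = 1)
    (hD1bin : ∀ ω, D1 ω = 0 ∨ D1 ω = 1)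
    (hD : ∀ ω, D ω = Z ω * D1 ω + (1 - Z ω) * D0 ω)
    (hYobs : ∀ ω, Y ω = D ω * Y1 ω + (1 - D ω) * Y0 ω)
    (hindep : IndepFun Z (fun ω => (Y0 ω, Y1 ω, D0 ω, D1 ω)) μ)
    (hmono : ∀ᵐ ω ∂μ, D0 ω ≤ D1 ω)
    (hnonzero : μ {ω | D0 ω = 1} < μ {ω | D1 ω = 1})
    (hZ1 : 0 < μ {ω | Z ω = 1}) (hZ0 : 0 < μ {ω | Z ω = 0}) :
    ∀ t : ℝ,
      (μ[|{ω | D1 ω = 1 ∧ D0 ω = 0}] {ω | Y0 ω ≤ t}).toReal =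
        ((∫ ω, (if Y ω ≤ t then 1 - D ω else 0) ∂μ[|{ω | Z ω = 1}]) -
            ∫ ω, (if Y ω ≤ t then 1 - D ω else 0) ∂μ[|{ω | Z ω = 0}]) /
          ((∫ ω, 1 - D ω ∂μ[|{ω | Z ω = 1}]) -
            ∫ ω, 1 - D ω ∂μ[|{ω | Z ω = 0}]) :=
  complier_control_cdf_identification_general μ Z D0 D1 Y0 Y1 D Y hZ hD0 hD1 hY0 hD0bin hD1bin hD
    hYobs hindep hmono hZ1 hZ0
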